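/- Let η̃ ∈ [0,1] and define δ₂(η̃) = √(2e+9)/(3(1-η̃)) for η̃ ∈ [0,1/3] and δ₂(η̃) = √(2e+9)/(6η̃) for η̃ ∈ (1/3,1]. Then for every ρ ≥ 0, the inequality 3ḡρe^{-ρ²}/√(9ρ²e^{-2ρ²}+1) < b̃₀(η̃) holds (where b̃₀(η̃) = 1/(1-η̃) on [0,1/3] and 1/(2η̃) on (1/3,1]) if and only if ḡ < δ₂(η̃). -/

import Mathlib

/-- The strong-convexity bound b̃₀ of the slippery-cross-slope metric. -/
noncomputable def btilde0 (η : ℝ) : ℝ := if η ≤ 1/3 then 1/(1-η) else 1/(2*η)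

/-- The admissible rescaled gravity bound δ₂ on the Gaussian bell-shaped hillside. -/
noncomputable def delta2 (η : ℝ) : ℝ :=
  if η ≤ 1/3 then Real.sqrt (2 * Real.exp 1 + 9) / (3*(1-η))
  else Real.sqrt (2 * Real.exp 1 + 9) / (6*η)

/-!
With `x = ρ e^{-ρ²}` the force is `3ḡ · x / √(9x² + 1)`, which increases with `x²`, and
`x² = ρ² e^{-2ρ²} ≤ e⁻¹ / 2` because `u e^{-u} ≤ e⁻¹`, with equality at `ρ = 1/√2`. So over
`ρ ≥ 0` the force attains its maximum `3ḡ / √(2e + 9)`, and `δ₂ = b̃₀ √(2e + 9) / 3`.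
-/

open Real Set

lemma forall_mul_lt_iff_of_isGreatest {α : Type*} {φ : α → ℝ} {s : Set α} {M b : ℝ}
    (hM : IsGreatest (φ '' s) M) (hφ : ∀ x ∈ s, 0 ≤ φ x) (hb : 0 < b) (c : ℝ) :
    (∀ x ∈ s, c * φ x < b) ↔ c * M < b := by
  obtain ⟨⟨x₀, hx₀, rfl⟩, hle⟩ := hM
  refine ⟨fun h ↦ h x₀ hx₀, fun h x hx ↦ ?_⟩
  rcases le_or_gt 0 c with hc | hc
  · exact (mul_le_mul_of_nonneg_left (hle ⟨x, hx, rfl⟩) hc).trans_lt h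
  · exact (mul_nonpos_of_nonpos_of_nonneg hc.le (hφ x hx)).trans_lt hb

lemma div_sqrt_mul_sq_add_one_le {a x y : ℝ} (ha : 0 ≤ a) (hx : 0 ≤ x) (hy : 0 ≤ y)
    (hxy : x ^ 2 ≤ y ^ 2) : x / √(a * x ^ 2 + 1) ≤ y / √(a * y ^ 2 + 1) := by
  rw [div_le_div_iff₀ (by positivity) (by positivity),
    ← pow_le_pow_iff_left₀ (by positivity) (by positivity) two_ne_zero, mul_pow, mul_pow,
    sq_sqrt (by positivity), sq_sqrt (by positivity)]
  nlinarith

lemma div_sqrt_mul_sq_add_one {x : ℝ} (hx : 0 < x) (a : ℝ) :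
    x / √(a * x ^ 2 + 1) = 1 / √(a + (x ^ 2)⁻¹) := by
  have : a * x ^ 2 + 1 = x ^ 2 * (a + (x ^ 2)⁻¹) := by field_simp
  rw [this, sqrt_mul (by positivity), sqrt_sq hx.le]
  field_simp

lemma sq_mul_exp_neg_sq_le (ρ : ℝ) : (ρ * exp (-ρ ^ 2)) ^ 2 ≤ exp (-1) / 2 := by
  have h : (ρ * exp (-ρ ^ 2)) ^ 2 = 2 * ρ ^ 2 * exp (-(2 * ρ ^ 2)) / 2 := by
    rw [mul_pow, ← exp_nat_mul]
    push_cast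
    ring_nf
  linarith [mul_exp_neg_le_exp_neg_one (2 * ρ ^ 2)]

noncomputable def gaussianBellWind (ρ : ℝ) : ℝ :=
  3 * ρ * exp (-ρ ^ 2) / √(9 * ρ ^ 2 * exp (-2 * ρ ^ 2) + 1)

lemma gaussianBellWind_eq (ρ : ℝ) :
    gaussianBellWind ρ = 3 * (ρ * exp (-ρ ^ 2) / √(9 * (ρ * exp (-ρ ^ 2)) ^ 2 + 1)) := by
  rw [gaussianBellWind, mul_pow, ← exp_nat_mul]
  push_cast
  ring_nf

lemma gaussianBellWind_nonneg {ρ : ℝ} (hρ : 0 ≤ ρ) : 0 ≤ gaussianBellWind ρ := by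
  unfold gaussianBellWind
  positivity

lemma sq_inv_sqrt_two_mul_exp : ((√2)⁻¹ * exp (-(√2)⁻¹ ^ 2)) ^ 2 = exp (-1) / 2 := by
  rw [mul_pow, ← exp_nat_mul, inv_pow, sq_sqrt zero_le_two]
  norm_num
  ring

lemma gaussianBellWind_inv_sqrt_two :
    gaussianBellWind (√2)⁻¹ = 3 / √(2 * exp 1 + 9) := by
  rw [gaussianBellWind_eq, div_sqrt_mul_sq_add_one (by positivity), sq_inv_sqrt_two_mul_exp,
    exp_neg]
  field_simp
  ring_nf

lemma isGreatest_gaussianBellWind :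
    IsGreatest (gaussianBellWind '' Ici 0) (3 / √(2 * exp 1 + 9)) := by
  refine ⟨⟨(√2)⁻¹, mem_Ici.2 (by positivity), gaussianBellWind_inv_sqrt_two⟩, ?_⟩
  rintro _ ⟨ρ, hρ, rfl⟩
  rw [← gaussianBellWind_inv_sqrt_two, gaussianBellWind_eq, gaussianBellWind_eq]
  gcongr 3 * ?_
  refine div_sqrt_mul_sq_add_one_le (by norm_num) (mul_nonneg hρ (exp_pos _).le)
    (by positivity) ?_
  exact sq_inv_sqrt_two_mul_exp ▸ sq_mul_exp_neg_sq_le ρ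

lemma btilde0_pos (η : ℝ) : 0 < btilde0 η := by
  unfold btilde0
  split_ifs <;> exact one_div_pos.2 (by linarith)

lemma delta2_eq (η : ℝ) : delta2 η = btilde0 η * √(2 * exp 1 + 9) / 3 := by
  unfold delta2 btilde0
  split_ifs <;> simp only [div_eq_mul_inv, mul_inv] <;> ring

theorem stmt_17 (η : ℝ) (g : ℝ) :
    (∀ ρ : ℝ, 0 ≤ ρ →
      3 * g * ρ * Real.exp (-ρ^2) / Real.sqrt (9 * ρ^2 * Real.exp (-2*ρ^2) + 1)
        < btilde0 η)
    ↔ g < delta2 η := by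
  have hwind (ρ : ℝ) : 3 * g * ρ * exp (-ρ ^ 2) / √(9 * ρ ^ 2 * exp (-2 * ρ ^ 2) + 1)
      = g * gaussianBellWind ρ := by
    rw [gaussianBellWind]; ring
  have hmax := forall_mul_lt_iff_of_isGreatest isGreatest_gaussianBellWind
    (fun _ ↦ gaussianBellWind_nonneg) (btilde0_pos η) g
  simp only [mem_Ici] at hmax
  simp_rw [hwind, hmax]
  rw [delta2_eq, lt_div_iff₀ three_pos, ← mul_div_assoc, div_lt_iff₀ (by positivity)]
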